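/- arXiv:2312.04061 — 2 statements merged into one kernel-verified Lean document; each statement's English description precedes it below -/
import Mathlib

section
/- Assume ε = −1, i.e. J is an invertible skew-symmetric n×n matrix over 𝔽_q (so n is even and G(J) is the symplectic group). For any two admissible pairs (X, Y) and (X', Y'), the matrices N(X, Y) and N(X', Y') are conjugate by an element of G(J) if and only if Y'·Y⁻¹ is a square in 𝔽_qˣ. Consequently, the elements N(X, Y), as (X, Y) ranges over all admissible pairs, fall into exactly two G(J)-conjugacy classes, and the class of N(X, Y) is determined by the square class of Y. (Lemma 3.3(ii)(iii), symplectic case.) -/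
/-!
`N(X, Y)` is the symplectic transvection `x ↦ x + Y⁻¹ (x J⁻¹ Xᵀ) X`, and conjugating it by an
isometry `g` gives `N(X g⁻¹, Y)`. The symplectic group acts transitively on nonzero rows (two
transvections suffice to move `X` to `X'`), and `N(s X, s² Y) = N(X, Y)`, so the class of `N(X, Y)`
depends only on the square class of `Y`. Conversely, `N(X, Y) = N(X', Y')` forces
`Y⁻¹ XᵀX = Y'⁻¹ X'ᵀX'`, and comparing a nonzero diagonal entry shows that `Y' Y⁻¹` is a square.
A finite field of odd characteristic has exactly two square classes.
-/

open Matrix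

variable {F : Type*} [Field F] {n : ℕ}

/-- `N(X,Y) = I - ᵅX·Y⁻¹·X = I + Y⁻¹·J⁻¹·Xᵀ·X`. -/
noncomputable def Nmat (J : Matrix (Fin n) (Fin n) F)
    (X : Matrix (Fin 1) (Fin n) F) (Y : F) : Matrix (Fin n) (Fin n) F :=
  1 + Y⁻¹ • (J⁻¹ * Xᵀ * X)

/-- `A` and `B` are conjugate by an element of the isometry group `G(J)`. -/
def IsGJConj (J A B : Matrix (Fin n) (Fin n) F) : Prop :=
  ∃ g : Matrix (Fin n) (Fin n) F, gᵀ * J * g = J ∧ g * A * g⁻¹ = B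

section SkewForm

variable {ι m : Type*} [Fintype ι] [DecidableEq ι] {J : Matrix ι ι F}

theorem transpose_inv_of_transpose_eq_neg (hJ : IsUnit J) (hJt : Jᵀ = -J) : J⁻¹ᵀ = -J⁻¹ := by
  rw [transpose_nonsing_inv, hJt]
  exact inv_eq_right_inv <| by rw [neg_mul_neg, mul_nonsing_inv _ ((isUnit_iff_isUnit_det J).mp hJ)]

theorem transpose_mul_inv_mul_transpose (hJ : IsUnit J) (hJt : Jᵀ = -J) (u v : Matrix m ι F) :
    (u * J⁻¹ * vᵀ)ᵀ = -(v * J⁻¹ * uᵀ) := by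
  rw [transpose_mul, transpose_mul, transpose_transpose, transpose_inv_of_transpose_eq_neg hJ hJt,
    Matrix.neg_mul, Matrix.mul_neg, Matrix.mul_assoc]

theorem mul_inv_mul_transpose_self (hJ : IsUnit J) (hJt : Jᵀ = -J) (h2 : (2 : F) ≠ 0)
    (u : Matrix (Fin 1) ι F) : u * J⁻¹ * uᵀ = 0 := by
  have hskew := transpose_mul_inv_mul_transpose hJ hJt u u
  rw [show (u * J⁻¹ * uᵀ)ᵀ = u * J⁻¹ * uᵀ from ext fun i j => by fin_cases i; fin_cases j; rfl,
    eq_neg_iff_add_eq_zero, ← two_smul F] at hskew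
  exact (smul_eq_zero.mp hskew).resolve_left h2

theorem exists_pairing_ne_zero (hJ : IsUnit J) {u : Matrix (Fin 1) ι F}
    (hu : u ≠ 0) : ∃ v : Matrix (Fin 1) ι F, (u * J⁻¹ * vᵀ) 0 0 ≠ 0 := by
  have huJ : u * J⁻¹ ≠ 0 := fun h => hu <| by
    simpa [h] using (nonsing_inv_mul_cancel_right J u ((isUnit_iff_isUnit_det J).mp hJ)).symm
  obtain ⟨i, k, hik⟩ : ∃ i k, (u * J⁻¹) i k ≠ 0 := by
    by_contra! h
    exact huJ (ext h)
  obtain rfl : i = 0 := Subsingleton.elim _ _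
  exact ⟨single 0 k 1, by simpa using hik⟩

end SkewForm

section Isometry

variable {ι : Type*} [Fintype ι] {J g h : Matrix ι ι F}

def IsIsometry (J g : Matrix ι ι F) : Prop :=
  gᵀ * J * g = J

theorem IsIsometry.mul (hg : IsIsometry J g) (hh : IsIsometry J h) : IsIsometry J (g * h) := by
  calc (g * h)ᵀ * J * (g * h) = hᵀ * (gᵀ * J * g) * h := by
        simp only [transpose_mul, Matrix.mul_assoc]
    _ = J := by rw [hg, hh]

variable [DecidableEq ι]

theorem IsIsometry.isUnit_det (hJ : IsUnit J) (hg : IsIsometry J g) : IsUnit g.det := by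
  have hdet := congrArg det hg
  rw [det_mul, det_mul, det_transpose] at hdet
  exact isUnit_of_mul_isUnit_right (hdet ▸ (isUnit_iff_isUnit_det J).mp hJ)

theorem IsIsometry.transpose_inv (hJ : IsUnit J) (hg : IsIsometry J g) : g⁻¹ᵀ = J * g * J⁻¹ := by
  rw [transpose_nonsing_inv]
  refine inv_eq_right_inv ?_
  rw [← Matrix.mul_assoc, ← Matrix.mul_assoc, hg,
    mul_nonsing_inv _ ((isUnit_iff_isUnit_det J).mp hJ)]

theorem IsIsometry.inv (hJ : IsUnit J) (hg : IsIsometry J g) : IsIsometry J g⁻¹ := by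
  rw [IsIsometry, hg.transpose_inv hJ,
    nonsing_inv_mul_cancel_right _ _ ((isUnit_iff_isUnit_det J).mp hJ), Matrix.mul_assoc,
    mul_nonsing_inv _ (hg.isUnit_det hJ), Matrix.mul_one]

end Isometry

section Transvection

variable {J : Matrix (Fin n) (Fin n) F}

theorem Nmat_isIsometry (hJ : IsUnit J) (hJt : Jᵀ = -J) (h2 : (2 : F) ≠ 0)
    (w : Matrix (Fin 1) (Fin n) F) (Y : F) : IsIsometry J (Nmat J w Y) := by
  have hdet := (isUnit_iff_isUnit_det J).mp hJ
  have hJA : J * (J⁻¹ * wᵀ * w) = wᵀ * w := by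
    rw [Matrix.mul_assoc, mul_nonsing_inv_cancel_left _ _ hdet]
  have hAJ : (J⁻¹ * wᵀ * w)ᵀ * J = -(wᵀ * w) := by
    rw [transpose_mul, transpose_mul, transpose_transpose, transpose_inv_of_transpose_eq_neg hJ hJt]
    simp only [Matrix.mul_neg, Matrix.neg_mul, ← Matrix.mul_assoc,
      nonsing_inv_mul_cancel_right _ _ hdet]
  have hAJA : wᵀ * w * (J⁻¹ * wᵀ * w) = 0 := by
    rw [show wᵀ * w * (J⁻¹ * wᵀ * w) = wᵀ * (w * J⁻¹ * wᵀ) * w by simp only [Matrix.mul_assoc],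
      mul_inv_mul_transpose_self hJ hJt h2, Matrix.mul_zero, Matrix.zero_mul]
  simp only [IsIsometry, Nmat, transpose_add, transpose_one, transpose_smul, Matrix.add_mul,
    Matrix.mul_add, Matrix.one_mul, Matrix.mul_one, Matrix.smul_mul, Matrix.mul_smul, hJA, hAJ,
    Matrix.neg_mul, hAJA]
  simp

theorem mul_Nmat (X w : Matrix (Fin 1) (Fin n) F) (Y : F) :
    X * Nmat J w Y = X + (Y⁻¹ * (X * J⁻¹ * wᵀ) 0 0) • w := by
  rw [Nmat, Matrix.mul_add, Matrix.mul_one, Matrix.mul_smul, mul_smul,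
    show X * (J⁻¹ * wᵀ * w) = X * J⁻¹ * wᵀ * w by simp only [Matrix.mul_assoc]]
  congr 2
  ext i j
  fin_cases i
  simp [Matrix.mul_apply]

theorem Nmat_smul (s : F) (X : Matrix (Fin 1) (Fin n) F) (Y : F) :
    Nmat J (s • X) Y = Nmat J X (Y / s ^ 2) := by
  simp only [Nmat, transpose_smul, Matrix.mul_smul, Matrix.smul_mul, smul_smul, inv_div]
  ring_nf

theorem conj_Nmat {g : Matrix (Fin n) (Fin n) F} (hJ : IsUnit J) (hg : IsIsometry J g)
    (X : Matrix (Fin 1) (Fin n) F) (Y : F) : g * Nmat J X Y * g⁻¹ = Nmat J (X * g⁻¹) Y := by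
  have hgJ : g * J⁻¹ = J⁻¹ * g⁻¹ᵀ := by
    rw [hg.transpose_inv hJ, ← Matrix.mul_assoc, ← Matrix.mul_assoc,
      nonsing_inv_mul _ ((isUnit_iff_isUnit_det J).mp hJ), Matrix.one_mul]
  rw [Nmat, Nmat, Matrix.mul_add, Matrix.add_mul, Matrix.mul_one,
    mul_nonsing_inv _ (hg.isUnit_det hJ), Matrix.mul_smul, Matrix.smul_mul, transpose_mul]
  simp only [← Matrix.mul_assoc, hgJ]

theorem isSquare_of_Nmat_eq (hJ : IsUnit J) {X X' : Matrix (Fin 1) (Fin n) F} {Y Y' : F}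
    (hX' : X' ≠ 0) (hY' : Y' ≠ 0) (h : Nmat J X Y = Nmat J X' Y') : IsSquare (Y' * Y⁻¹) := by
  have hgram : Y⁻¹ • (Xᵀ * X) = Y'⁻¹ • (X'ᵀ * X') := by
    have := congrArg (J * ·) (add_left_cancel h)
    simpa only [Matrix.mul_smul, ← Matrix.mul_assoc,
      mul_nonsing_inv _ ((isUnit_iff_isUnit_det J).mp hJ), Matrix.one_mul] using this
  obtain ⟨i, hi⟩ : ∃ i, X' 0 i ≠ 0 := by
    by_contra! h0
    exact hX' (ext fun r i => by simpa [Subsingleton.elim r 0] using h0 i)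
  have hii : Y⁻¹ * (X 0 i * X 0 i) = Y'⁻¹ * (X' 0 i * X' 0 i) := by
    simpa [Matrix.mul_apply] using congrFun (congrFun hgram i) i
  have hXi : X 0 i ≠ 0 := by
    rintro hXi
    simp [hXi, hY', hi] at hii
  refine ⟨X' 0 i / X 0 i, ?_⟩
  field_simp at hii ⊢
  linear_combination hii

theorem exists_isIsometry_mul_eq_of_pairing_ne_zero (hJ : IsUnit J) (hJt : Jᵀ = -J)
    (h2 : (2 : F) ≠ 0) {X Z : Matrix (Fin 1) (Fin n) F} (hXZ : (X * J⁻¹ * Zᵀ) 0 0 ≠ 0) :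
    ∃ g, IsIsometry J g ∧ X * g = Z := by
  -- `X` pairs to zero with itself, so the transvection along `Z - X` moves `X` to `X + (Z - X)`
  refine ⟨Nmat J (Z - X) ((X * J⁻¹ * Zᵀ) 0 0), Nmat_isIsometry hJ hJt h2 _ _, ?_⟩
  rw [mul_Nmat, transpose_sub, Matrix.mul_sub, mul_inv_mul_transpose_self hJ hJt h2, sub_zero,
    inv_mul_cancel₀ hXZ, one_smul, add_sub_cancel]

theorem exists_pairing_ne_zero_and_ne_zero (hJ : IsUnit J)
    {X X' : Matrix (Fin 1) (Fin n) F} (hX : X ≠ 0) (hX' : X' ≠ 0) :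
    ∃ Z : Matrix (Fin 1) (Fin n) F, (X * J⁻¹ * Zᵀ) 0 0 ≠ 0 ∧ (X' * J⁻¹ * Zᵀ) 0 0 ≠ 0 := by
  obtain ⟨a, ha⟩ := exists_pairing_ne_zero hJ hX
  obtain ⟨c, hc⟩ := exists_pairing_ne_zero hJ hX'
  by_cases hXc : (X * J⁻¹ * cᵀ) 0 0 = 0
  · by_cases hX'a : (X' * J⁻¹ * aᵀ) 0 0 = 0
    · refine ⟨a + c, ?_, ?_⟩ <;>
        simpa only [transpose_add, Matrix.mul_add, Matrix.add_apply, hXc, hX'a, add_zero, zero_add]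
    · exact ⟨a, ha, hX'a⟩
  · exact ⟨c, hXc, hc⟩

theorem exists_isIsometry_mul_eq (hJ : IsUnit J) (hJt : Jᵀ = -J) (h2 : (2 : F) ≠ 0)
    {X X' : Matrix (Fin 1) (Fin n) F} (hX : X ≠ 0) (hX' : X' ≠ 0) :
    ∃ g, IsIsometry J g ∧ X * g = X' := by
  obtain ⟨Z, hXZ, hX'Z⟩ := exists_pairing_ne_zero_and_ne_zero hJ hX hX'
  have hZX' : (Z * J⁻¹ * X'ᵀ) 0 0 ≠ 0 := by
    have hskew := congrFun (congrFun (transpose_mul_inv_mul_transpose hJ hJt X' Z) 0) 0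
    rw [transpose_apply, neg_apply] at hskew
    rwa [hskew, neg_ne_zero] at hX'Z
  obtain ⟨g₁, hg₁, hXg₁⟩ := exists_isIsometry_mul_eq_of_pairing_ne_zero hJ hJt h2 hXZ
  obtain ⟨g₂, hg₂, hZg₂⟩ := exists_isIsometry_mul_eq_of_pairing_ne_zero hJ hJt h2 hZX'
  exact ⟨g₁ * g₂, hg₁.mul hg₂, by rw [← Matrix.mul_assoc, hXg₁, hZg₂]⟩

end Transvection

theorem isGJConj_Nmat_iff {J : Matrix (Fin n) (Fin n) F} (hJ : IsUnit J) (hJt : Jᵀ = -J)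
    (h2 : (2 : F) ≠ 0) {X X' : Matrix (Fin 1) (Fin n) F} {Y Y' : F} (hX : X ≠ 0) (hY : Y ≠ 0)
    (hX' : X' ≠ 0) (hY' : Y' ≠ 0) :
    IsGJConj J (Nmat J X Y) (Nmat J X' Y') ↔ IsSquare (Y' * Y⁻¹) := by
  constructor
  · rintro ⟨g, hg, hconj⟩
    rw [conj_Nmat hJ hg] at hconj
    exact isSquare_of_Nmat_eq hJ hX' hY' hconj
  · rintro ⟨s, hs⟩
    have hs0 : s ≠ 0 := by
      rintro rfl
      simp [hY, hY'] at hs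
    have hN : Nmat J X' Y' = Nmat J (s⁻¹ • X') Y := by
      rw [Nmat_smul, inv_pow, div_inv_eq_mul, sq, ← hs, mul_comm Y', mul_inv_cancel_left₀ hY]
    obtain ⟨g, hg, hXg⟩ :=
      exists_isIsometry_mul_eq hJ hJt h2 hX (smul_ne_zero (inv_ne_zero hs0) hX')
    refine ⟨g⁻¹, hg.inv hJ, ?_⟩
    rw [conj_Nmat hJ (hg.inv hJ), nonsing_inv_nonsing_inv _ (hg.isUnit_det hJ), hXg, hN]

theorem FiniteField.isSquare_mul_inv_of_not_isSquare [Fintype F] {a b : F} (ha : ¬IsSquare a)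
    (hb : ¬IsSquare b) : IsSquare (a * b⁻¹) := by
  classical
  have hb0 : b ≠ 0 := by
    rintro rfl
    exact hb IsSquare.zero
  have hχ : quadraticChar F (a * b⁻¹) * quadraticChar F b = quadraticChar F a := by
    rw [← map_mul, inv_mul_cancel_right₀ hb0]
  rw [quadraticChar_neg_one_iff_not_isSquare.mpr ha,
    quadraticChar_neg_one_iff_not_isSquare.mpr hb] at hχ
  refine (quadraticChar_one_iff_isSquare ?_).mp (by linarith)
  exact mul_ne_zero (fun h => ha (h ▸ IsSquare.zero)) (inv_ne_zero hb0)

/-- Lemma 3.3(ii)(iii), symplectic case: `J` is an invertible skew-symmetric matrix over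
`𝔽_q` (`q` odd).  For admissible pairs (here: `X ≠ 0`, `Y ≠ 0`; the admissibility equation
is automatic), `N(X,Y)` and `N(X',Y')` are `G(J)`-conjugate iff `Y'·Y⁻¹` is a square.
Consequently, the elements `N(X,Y)` fall into exactly two `G(J)`-conjugacy classes, the
class being determined by the square class of `Y`. -/
theorem N_conj_iff_square_symplectic
    (F : Type*) [Field F] [Fintype F] (hF : ringChar F ≠ 2)
    (n : ℕ) (hn : 0 < n)
    (J : Matrix (Fin n) (Fin n) F) (hJ : IsUnit J) (hJt : Jᵀ = -J) :
    (∀ (X X' : Matrix (Fin 1) (Fin n) F) (Y Y' : F),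
      X ≠ 0 → Y ≠ 0 → X' ≠ 0 → Y' ≠ 0 →
        (IsGJConj J (Nmat J X Y) (Nmat J X' Y') ↔ IsSquare (Y' * Y⁻¹))) ∧
    ∃ (X₁ X₂ : Matrix (Fin 1) (Fin n) F) (Y₁ Y₂ : F),
      X₁ ≠ 0 ∧ Y₁ ≠ 0 ∧ X₂ ≠ 0 ∧ Y₂ ≠ 0 ∧
      ¬ IsGJConj J (Nmat J X₁ Y₁) (Nmat J X₂ Y₂) ∧
      ∀ (X : Matrix (Fin 1) (Fin n) F) (Y : F), X ≠ 0 → Y ≠ 0 →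
        IsGJConj J (Nmat J X Y) (Nmat J X₁ Y₁) ∨
        IsGJConj J (Nmat J X Y) (Nmat J X₂ Y₂) := by
  have hiff := fun (X X' : Matrix (Fin 1) (Fin n) F) (Y Y' : F) (hX : X ≠ 0) (hY : Y ≠ 0)
      (hX' : X' ≠ 0) (hY' : Y' ≠ 0) =>
    isGJConj_Nmat_iff hJ hJt (Ring.two_ne_zero hF) hX hY hX' hY'
  obtain ⟨u, hu⟩ := FiniteField.exists_nonsquare hF
  have hu0 : u ≠ 0 := by
    rintro rfl
    exact hu IsSquare.zero
  let X₀ : Matrix (Fin 1) (Fin n) F := of fun _ _ => 1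
  have hX₀ : X₀ ≠ 0 := fun h => one_ne_zero (congrFun (congrFun h 0) ⟨0, hn⟩)
  refine ⟨hiff, X₀, X₀, 1, u, hX₀, one_ne_zero, hX₀, hu0, ?_, fun X Y hX hY => ?_⟩
  · rwa [hiff _ _ _ _ hX₀ one_ne_zero hX₀ hu0, inv_one, mul_one]
  rw [hiff _ _ _ _ hX hY hX₀ one_ne_zero, hiff _ _ _ _ hX hY hX₀ hu0, one_mul]
  by_cases hYsq : IsSquare Y
  · exact .inl hYsq.inv
  · exact .inr (FiniteField.isSquare_mul_inv_of_not_isSquare hu hYsq)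
end

section
/- Let h ∈ GL(n, 𝔽_q) and λ ∈ 𝔽_qˣ satisfy hᵀ·J·h = λ·J (so h is a similitude of the form J with factor λ), and suppose λ is NOT a square in 𝔽_qˣ. Then for every admissible pair (X, Y), the matrix h·N(X, Y)·h⁻¹ belongs to G(J) but is not conjugate to N(X, Y) by any element of G(J). (Lemma 3.3(iv): conjugation by a similitude with nonsquare factor exchanges the two conjugacy classes C_□ and C_⊄.) -/
/-!
Conjugating by a similitude `h` with factor `λ` sends `N(X, Y)` to `N(X·h⁻¹, Y/λ)`, and a similitude
normalizes `G(J)`, so `h·N(X, Y)·h⁻¹` is again an isometry. An isometry `g` is a similitude with factor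
`1`, so `g·N(X, Y)·g⁻¹ = N(X·g⁻¹, Y)`. Since `J` is invertible, `N(X, Y)` determines the rank-one
matrix `Y⁻¹·Xᵀ·X`, and `Y⁻¹·Xᵀ·X = Y'⁻¹·X'ᵀ·X'` with `X ≠ 0` forces `Y/Y'` to be a square (compare a
nonzero diagonal entry). A `G(J)`-conjugacy would therefore make `λ = Y/(Y/λ)` a square.
-/

open Matrix

variable {F : Type*} [Field F] {n : ℕ}

namespace Matrix

section CommRing

variable {R m : Type*} [CommRing R] [Fintype m] [DecidableEq m]

theorem isUnit_of_transpose_mul_mul_eq {J g : Matrix m m R} (hJ : IsUnit J)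
    (hg : gᵀ * J * g = J) : IsUnit g := by
  rw [isUnit_iff_isUnit_det] at hJ ⊢
  rw [← hg, det_mul] at hJ
  exact isUnit_of_mul_isUnit_right hJ

theorem conj_isometry_of_similitude {J h A : Matrix m m R} {l : R}
    (hh : IsUnit h) (hsim : hᵀ * J * h = l • J) (hA : Aᵀ * J * A = J) :
    (h * A * h⁻¹)ᵀ * J * (h * A * h⁻¹) = J := by
  have hdet := (isUnit_iff_isUnit_det h).mp hh
  calc (h * A * h⁻¹)ᵀ * J * (h * A * h⁻¹)
      = h⁻¹ᵀ * (Aᵀ * (hᵀ * J * h) * A) * h⁻¹ := by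
        simp only [transpose_mul, Matrix.mul_assoc]
    _ = h⁻¹ᵀ * (hᵀ * J * h) * h⁻¹ := by
        rw [hsim, Matrix.mul_smul, Matrix.smul_mul, hA]
    _ = J := by
        simp only [← Matrix.mul_assoc]
        rw [← transpose_mul, mul_nonsing_inv _ hdet, transpose_one, Matrix.one_mul,
          mul_nonsing_inv_cancel_right _ _ hdet]

theorem mul_inv_mul_transpose_of_similitude {J h : Matrix m m R} {l : R}
    (hJ : IsUnit J) (hh : IsUnit h) (hsim : hᵀ * J * h = l • J) :
    h * J⁻¹ * hᵀ = l • J⁻¹ := by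
  have hJ := (isUnit_iff_isUnit_det J).mp hJ
  have hh := (isUnit_iff_isUnit_det h).mp hh
  calc h * J⁻¹ * hᵀ = h * J⁻¹ * (hᵀ * J * h) * h⁻¹ * J⁻¹ := by
        simp only [Matrix.mul_assoc, mul_nonsing_inv _ hh, mul_nonsing_inv _ hJ, Matrix.mul_one]
    _ = l • J⁻¹ := by
        rw [hsim]
        simp [Matrix.mul_assoc, nonsing_inv_mul _ hJ, mul_nonsing_inv_cancel_left _ _ hh]

theorem mul_fin_one_mul {k l : Type*} [Fintype k] (A : Matrix k (Fin 1) R)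
    (S : Matrix (Fin 1) (Fin 1) R) (B : Matrix (Fin 1) l R) :
    A * S * B = S 0 0 • (A * B) := by
  ext i j
  simp only [mul_apply, Finset.univ_unique, Fin.default_eq_zero, Finset.sum_singleton,
    smul_apply, smul_eq_mul]
  ring

end CommRing

end Matrix

theorem Nmat_isometry {ε Y : F} {J : Matrix (Fin n) (Fin n) F} {X : Matrix (Fin 1) (Fin n) F}
    (hε : ε ≠ 0) (hJ : IsUnit J) (hJt : Jᵀ = ε • J) (hY : Y ≠ 0)
    (hadm : (X * (-(J⁻¹ * Xᵀ))) 0 0 = (1 + ε) * Y) :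
    (Nmat J X Y)ᵀ * J * Nmat J X Y = J := by
  have hdet := (isUnit_iff_isUnit_det J).mp hJ
  have hJinvT : J⁻¹ᵀ = ε⁻¹ • J⁻¹ := by
    rw [transpose_nonsing_inv, hJt]
    refine inv_eq_right_inv ?_
    rw [smul_mul_smul_comm, mul_inv_cancel₀ hε, mul_nonsing_inv _ hdet, one_smul]
  have hJX : J * (J⁻¹ * Xᵀ * X) = Xᵀ * X := by
    rw [Matrix.mul_assoc, mul_nonsing_inv_cancel_left _ _ hdet]
  have hXJ : Xᵀ * (X * J⁻¹) * J = Xᵀ * X := by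
    rw [Matrix.mul_assoc, nonsing_inv_mul_cancel_right _ _ hdet]
  have hXJX : Xᵀ * X * (J⁻¹ * Xᵀ * X) = -((1 + ε) * Y) • (Xᵀ * X) := by
    rw [← hadm, Matrix.mul_neg, neg_apply, neg_neg, ← mul_fin_one_mul]
    simp only [Matrix.mul_assoc]
  have hcoeff : Y⁻¹ + Y⁻¹ * ε⁻¹ + Y⁻¹ * ε⁻¹ * Y⁻¹ * -((1 + ε) * Y) = 0 := by
    field_simp
    ring
  calc (Nmat J X Y)ᵀ * J * Nmat J X Y
      = J + (Y⁻¹ + Y⁻¹ * ε⁻¹ + Y⁻¹ * ε⁻¹ * Y⁻¹ * -((1 + ε) * Y)) • (Xᵀ * X) := by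
        simp only [Nmat, transpose_add, transpose_one, transpose_smul, transpose_mul,
          transpose_transpose, hJinvT, Matrix.add_mul, Matrix.mul_add, Matrix.one_mul,
          Matrix.mul_one, Matrix.smul_mul, Matrix.mul_smul, smul_smul, add_smul,
          hJX, hXJ, hXJX]
        module
    _ = J := by rw [hcoeff, zero_smul, add_zero]

theorem conj_Nmat_of_similitude {J h : Matrix (Fin n) (Fin n) F} {l : F} (hJ : IsUnit J)
    (hh : IsUnit h) (hsim : hᵀ * J * h = l • J) (X : Matrix (Fin 1) (Fin n) F) (Y : F) :
    h * Nmat J X Y * h⁻¹ = Nmat J (X * h⁻¹) (Y / l) := by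
  have hdet := (isUnit_iff_isUnit_det h).mp hh
  have hcore : h * (J⁻¹ * Xᵀ * X) * h⁻¹ = l • (J⁻¹ * (X * h⁻¹)ᵀ * (X * h⁻¹)) := by
    calc h * (J⁻¹ * Xᵀ * X) * h⁻¹ = h * J⁻¹ * hᵀ * (h⁻¹ᵀ * Xᵀ) * (X * h⁻¹) := by
          rw [transpose_nonsing_inv]
          simp only [Matrix.mul_assoc, mul_nonsing_inv_cancel_left _ _
            (show IsUnit hᵀ.det by rwa [det_transpose])]
      _ = l • (J⁻¹ * (X * h⁻¹)ᵀ * (X * h⁻¹)) := by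
          rw [mul_inv_mul_transpose_of_similitude hJ hh hsim, transpose_mul]
          simp only [Matrix.smul_mul, Matrix.mul_assoc]
  rw [Nmat, Nmat, Matrix.mul_add, Matrix.add_mul, Matrix.mul_one, mul_nonsing_inv _ hdet,
    Matrix.mul_smul, Matrix.smul_mul, hcore, smul_smul, inv_div, div_eq_inv_mul]

theorem isSquare_div_of_smul_transpose_mul_self_eq {m : Type*} {a b : F}
    {X X' : Matrix (Fin 1) m F} (hX : X ≠ 0) (ha : a ≠ 0)
    (h : a • (Xᵀ * X) = b • (X'ᵀ * X')) : IsSquare (b / a) := by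
  obtain ⟨i, hi⟩ : ∃ i, X 0 i ≠ 0 := by
    by_contra! h0
    exact hX (ext fun r i => by rw [Subsingleton.elim r 0, h0, Matrix.zero_apply])
  have hii : a * (X 0 i * X 0 i) = b * (X' 0 i * X' 0 i) := by
    simpa [mul_apply] using congrFun (congrFun h i) i
  have hi' : X' 0 i ≠ 0 := by
    rintro h0
    simp [h0, ha, hi] at hii
  refine ⟨X 0 i / X' 0 i, ?_⟩
  field_simp
  linear_combination -hii

theorem isSquare_div_of_Nmat_eq {J : Matrix (Fin n) (Fin n) F} {X X' : Matrix (Fin 1) (Fin n) F}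
    {Y Y' : F} (hJ : IsUnit J) (hX : X ≠ 0) (hY : Y ≠ 0) (h : Nmat J X Y = Nmat J X' Y') :
    IsSquare (Y / Y') := by
  have hdet := (isUnit_iff_isUnit_det J).mp hJ
  have hgram : Y⁻¹ • (Xᵀ * X) = Y'⁻¹ • (X'ᵀ * X') := by
    have := congrArg (J * ·) (add_left_cancel h)
    simpa only [Matrix.mul_smul, Matrix.mul_assoc, mul_nonsing_inv_cancel_left _ _ hdet] using this
  simpa [div_eq_mul_inv, mul_comm] using
    isSquare_div_of_smul_transpose_mul_self_eq hX (inv_ne_zero hY) hgram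

theorem similitude_exchanges_classes_general
    (F : Type*) [Field F]
    (n : ℕ) (ε : F) (hε : ε = 1 ∨ ε = -1)
    (J : Matrix (Fin n) (Fin n) F) (hJ : IsUnit J) (hJt : Jᵀ = ε • J)
    (h : Matrix (Fin n) (Fin n) F) (hh : IsUnit h)
    (l : F) (hsim : hᵀ * J * h = l • J) (hns : ¬ IsSquare l)
    (X : Matrix (Fin 1) (Fin n) F) (hX : X ≠ 0) (Y : F) (hY : Y ≠ 0)
    (hadm : (X * (-(J⁻¹ * Xᵀ))) 0 0 = (1 + ε) * Y) :
    (h * Nmat J X Y * h⁻¹)ᵀ * J * (h * Nmat J X Y * h⁻¹) = J ∧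
      ¬ IsGJConj J (Nmat J X Y) (h * Nmat J X Y * h⁻¹) := by
  have hε0 : ε ≠ 0 := by rcases hε with rfl | rfl <;> norm_num
  refine ⟨conj_isometry_of_similitude hh hsim
    (Nmat_isometry hε0 hJ hJt hY hadm), ?_⟩
  rintro ⟨g, hgJ, hconj⟩
  have hg : IsUnit g := isUnit_of_transpose_mul_mul_eq hJ hgJ
  rw [conj_Nmat_of_similitude hJ hg (by rw [hgJ, one_smul]) X Y, div_one,
    conj_Nmat_of_similitude hJ hh hsim X Y] at hconj
  have hXg : X * g⁻¹ ≠ 0 := fun h0 => hX <| by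
    rw [← nonsing_inv_mul_cancel_right (A := g) X ((isUnit_iff_isUnit_det g).mp hg), h0,
      Matrix.zero_mul]
  have hsq := isSquare_div_of_Nmat_eq hJ hXg hY hconj
  rw [div_div_cancel₀ hY] at hsq
  exact hns hsq

/-- Lemma 3.3(iv): if `h ∈ GL(n,𝔽_q)` is a similitude of `J` with factor `λ` (that is,
`hᵀ·J·h = λ·J`) and `λ` is not a square, then for every admissible pair `(X,Y)` the
matrix `h·N(X,Y)·h⁻¹` lies in `G(J)` but is not `G(J)`-conjugate to `N(X,Y)`:
conjugation by `h` exchanges the two classes `C_□` and `C_⊄`. -/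
theorem similitude_exchanges_classes
    (F : Type*) [Field F] [Fintype F] (hF : ringChar F ≠ 2)
    (n : ℕ) (ε : F) (hε : ε = 1 ∨ ε = -1)
    (J : Matrix (Fin n) (Fin n) F) (hJ : IsUnit J) (hJt : Jᵀ = ε • J)
    (h : Matrix (Fin n) (Fin n) F) (hh : IsUnit h)
    (l : F) (hl : l ≠ 0) (hsim : hᵀ * J * h = l • J) (hns : ¬ IsSquare l)
    (X : Matrix (Fin 1) (Fin n) F) (hX : X ≠ 0) (Y : F) (hY : Y ≠ 0)
    (hadm : (X * (-(J⁻¹ * Xᵀ))) 0 0 = (1 + ε) * Y) :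
    (h * Nmat J X Y * h⁻¹)ᵀ * J * (h * Nmat J X Y * h⁻¹) = J ∧
      ¬ IsGJConj J (Nmat J X Y) (h * Nmat J X Y * h⁻¹) :=
  similitude_exchanges_classes_general F n ε hε J hJ hJt h hh l hsim hns X hX Y hY hadm
end
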